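/- Let p > 1 and let f be holomorphic on U^n with ‖f‖_p < ∞. Then for every z ∈ U^n, |f(z)| ≤ (1/n + 2^{p−1}/(p−1)) · (Σ_{k=1}^n 1/(1−|z_k|²)^{p−1}) · ‖f‖_p. -/

import Mathlib

open Metric Set Filter

noncomputable section

def polydisc (n : ℕ) : Set (Fin n → ℂ) := {z | ∀ j, ‖z j‖ < 1}

def blochSum (n : ℕ) (p : ℝ) (f : (Fin n → ℂ) → ℂ) (z : Fin n → ℂ) : ℝ :=
  ∑ k : Fin n, ‖fderiv ℂ f z (Pi.single k 1)‖ * (1 - ‖z k‖ ^ 2) ^ p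

def blochNorm (n : ℕ) (p : ℝ) (f : (Fin n → ℂ) → ℂ) : ℝ :=
  ‖f 0‖ + sSup (blochSum n p f '' polydisc n)

def MemBloch (n : ℕ) (p : ℝ) (f : (Fin n → ℂ) → ℂ) : Prop :=
  DifferentiableOn ℂ f (polydisc n) ∧ BddAbove (blochSum n p f '' polydisc n)

def IsPolyFn (n : ℕ) (g : (Fin n → ℂ) → ℂ) : Prop :=
  ∃ P : MvPolynomial (Fin n) ℂ, ∀ z, g z = MvPolynomial.eval z P

def MemLittleBloch (n : ℕ) (p : ℝ) (f : (Fin n → ℂ) → ℂ) : Prop :=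
  MemBloch n p f ∧ ∀ ε : ℝ, 0 < ε →
    ∃ g, IsPolyFn n g ∧ blochNorm n p (fun z => f z - g z) < ε

def MemLittleStarBloch (n : ℕ) (p : ℝ) (f : (Fin n → ℂ) → ℂ) : Prop :=
  MemBloch n p f ∧ ∀ z : ℕ → Fin n → ℂ, (∀ j, z j ∈ polydisc n) →
    (∀ k, Tendsto (fun j => ‖z j k‖) atTop (nhds 1)) →
    Tendsto (fun j => blochSum n p f (z j)) atTop (nhds 0)

def HoloSelfMap (n : ℕ) (φ : (Fin n → ℂ) → Fin n → ℂ) : Prop :=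
  DifferentiableOn ℂ φ (polydisc n) ∧ ∀ z ∈ polydisc n, φ z ∈ polydisc n

def compSum (n : ℕ) (p q : ℝ) (φ : (Fin n → ℂ) → Fin n → ℂ) (z : Fin n → ℂ) : ℝ :=
  ∑ k : Fin n, ∑ l : Fin n, ‖fderiv ℂ φ z (Pi.single k 1) l‖ *
    ((1 - ‖z k‖ ^ 2) ^ q / (1 - ‖φ z l‖ ^ 2) ^ p)

/-! Let `C` be the supremum in the Bloch norm. Then `|∂ₖf(w)| ≤ C / (1 - |wₖ|²)ᵖ ≤ C / (1 - |wₖ|)ᵖ`,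
so along the radius `t ↦ t z` the derivative of `f(t z)` is bounded by `C ∑ₖ |zₖ| / (1 - t|zₖ|)ᵖ`,
which is the derivative of `C / (p - 1) ∑ₖ (1 - t|zₖ|)^(1-p)`. The mean value inequality gives
`|f(z) - f(0)| ≤ C / (p - 1) ∑ₖ (1 - |zₖ|)^(1-p)`, and `1 - |zₖ|² ≤ 2 (1 - |zₖ|)` turns this into
`2^(p-1) / (p - 1) · C ∑ₖ (1 - |zₖ|²)^(1-p)`. Finally `|f(0)|` is absorbed by the `1/n` term, since
each summand `(1 - |zₖ|²)^(1-p)` is at least `1`. -/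

lemma isOpen_polydisc (n : ℕ) : IsOpen (polydisc n) := by
  simp only [polydisc, ofPred_forall]
  exact isOpen_iInter_of_finite fun j => isOpen_lt (continuous_apply j).norm continuous_const

lemma one_sub_norm_sq_pos {n : ℕ} {z : Fin n → ℂ} (hz : z ∈ polydisc n) (k : Fin n) :
    0 < 1 - ‖z k‖ ^ 2 := by
  have := hz k
  nlinarith [norm_nonneg (z k)]

lemma norm_smul_apply_of_nonneg {n : ℕ} (z : Fin n → ℂ) {t : ℝ} (ht : 0 ≤ t) (k : Fin n) :
    ‖(t • z) k‖ = t * ‖z k‖ := by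
  rw [Pi.smul_apply, norm_smul, Real.norm_of_nonneg ht]

lemma smul_mem_polydisc {n : ℕ} {z : Fin n → ℂ} (hz : z ∈ polydisc n) {t : ℝ}
    (ht : t ∈ Icc (0 : ℝ) 1) : t • z ∈ polydisc n := fun k => by
  rw [norm_smul_apply_of_nonneg z ht.1]
  exact (mul_le_of_le_one_left (norm_nonneg _) ht.2).trans_lt (hz k)

lemma one_sub_mul_norm_pos {n : ℕ} {z : Fin n → ℂ} (hz : z ∈ polydisc n) {t : ℝ}
    (ht : t ∈ Icc (0 : ℝ) 1) (k : Fin n) : 0 < 1 - t * ‖z k‖ := by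
  have := smul_mem_polydisc hz ht k
  rw [norm_smul_apply_of_nonneg z ht.1] at this
  linarith

def blochSeminorm (n : ℕ) (p : ℝ) (f : (Fin n → ℂ) → ℂ) : ℝ :=
  sSup (blochSum n p f '' polydisc n)

lemma blochNorm_eq (n : ℕ) (p : ℝ) (f : (Fin n → ℂ) → ℂ) :
    blochNorm n p f = ‖f 0‖ + blochSeminorm n p f := rfl

lemma blochSeminorm_nonneg (n : ℕ) (p : ℝ) (f : (Fin n → ℂ) → ℂ) : 0 ≤ blochSeminorm n p f := by
  refine Real.sSup_nonneg ?_
  rintro _ ⟨w, hw, rfl⟩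
  exact Finset.sum_nonneg fun k _ =>
    mul_nonneg (norm_nonneg _) (Real.rpow_nonneg (one_sub_norm_sq_pos hw k).le p)

lemma norm_fderiv_single_le {n : ℕ} {p : ℝ} {f : (Fin n → ℂ) → ℂ}
    (hf : BddAbove (blochSum n p f '' polydisc n)) {w : Fin n → ℂ} (hw : w ∈ polydisc n)
    (k : Fin n) :
    ‖fderiv ℂ f w (Pi.single k 1)‖ ≤ blochSeminorm n p f / (1 - ‖w k‖ ^ 2) ^ p := by
  rw [le_div_iff₀ (Real.rpow_pos_of_pos (one_sub_norm_sq_pos hw k) p)]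
  refine le_trans ?_ (le_csSup hf ⟨w, hw, rfl⟩)
  exact Finset.single_le_sum (f := fun j => ‖fderiv ℂ f w (Pi.single j 1)‖ * (1 - ‖w j‖ ^ 2) ^ p)
    (fun j _ => mul_nonneg (norm_nonneg _) (Real.rpow_nonneg (one_sub_norm_sq_pos hw j).le p))
    (Finset.mem_univ k)

lemma ContinuousLinearMap.norm_apply_le_sum_norm_apply_single {𝕜 ι E : Type*}
    [NontriviallyNormedField 𝕜] [Fintype ι] [DecidableEq ι] [NormedAddCommGroup E]
    [NormedSpace 𝕜 E] (L : (ι → 𝕜) →L[𝕜] E) (v : ι → 𝕜) :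
    ‖L v‖ ≤ ∑ i, ‖v i‖ * ‖L (Pi.single i 1)‖ := by
  conv_lhs => rw [pi_eq_sum_univ' v, map_sum]
  refine (norm_sum_le _ _).trans_eq (Finset.sum_congr rfl fun i _ => ?_)
  rw [map_smul, norm_smul]

lemma norm_fderiv_smul_apply_le {n : ℕ} {p : ℝ} (hp : 0 ≤ p) {f : (Fin n → ℂ) → ℂ}
    (hf : BddAbove (blochSum n p f '' polydisc n)) {z : Fin n → ℂ} (hz : z ∈ polydisc n)
    {t : ℝ} (ht : t ∈ Icc (0 : ℝ) 1) :
    ‖fderiv ℂ f (t • z) z‖ ≤ blochSeminorm n p f * ∑ k, ‖z k‖ / (1 - t * ‖z k‖) ^ p := by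
  rw [Finset.mul_sum]
  refine (ContinuousLinearMap.norm_apply_le_sum_norm_apply_single _ z).trans
    (Finset.sum_le_sum fun k _ => ?_)
  rw [mul_div_left_comm]
  refine mul_le_mul_of_nonneg_left ?_ (norm_nonneg _)
  have htz : t • z ∈ polydisc n := smul_mem_polydisc hz ht
  have hpos : 0 < 1 - t * ‖z k‖ := one_sub_mul_norm_pos hz ht k
  have hweight : 1 - t * ‖z k‖ ≤ 1 - ‖(t • z) k‖ ^ 2 := by
    rw [norm_smul_apply_of_nonneg z ht.1]
    nlinarith [mul_nonneg ht.1 (norm_nonneg (z k))]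
  refine (norm_fderiv_single_le hf htz k).trans ?_
  gcongr
  exact blochSeminorm_nonneg n p f

lemma hasDerivAt_one_sub_mul_rpow_div {p r t : ℝ} (hp : p ≠ 1) (ht : 0 < 1 - t * r) :
    HasDerivAt (fun s => (1 - s * r) ^ (1 - p) / (p - 1)) (r / (1 - t * r) ^ p) t := by
  have hlin : HasDerivAt (fun s : ℝ => 1 - s * r) (-r) t := by
    simpa using ((hasDerivAt_id t).mul_const r).const_sub 1
  refine (((Real.hasDerivAt_rpow_const (p := 1 - p) (Or.inl ht.ne')).comp t hlin).div_const
    (p - 1)).congr_deriv ?_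
  rw [show 1 - p - 1 = -p by ring, Real.rpow_neg ht.le]
  field_simp [sub_ne_zero.mpr hp]
  ring

lemma norm_sub_le_sub_of_norm_deriv_le_deriv {E : Type*} [NormedAddCommGroup E]
    [NormedSpace ℝ E] {g g' : ℝ → E} {B B' : ℝ → ℝ} {a b : ℝ} (hab : a ≤ b)
    (hg : ∀ t ∈ Icc a b, HasDerivAt g (g' t) t) (hB : ∀ t ∈ Icc a b, HasDerivAt B (B' t) t)
    (bound : ∀ t ∈ Ico a b, ‖g' t‖ ≤ B' t) : ‖g b - g a‖ ≤ B b - B a :=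
  image_norm_le_of_norm_deriv_right_le_deriv_boundary' (f := fun t => g t - g a)
    (B := fun t => B t - B a)
    (fun t ht => ((hg t ht).sub_const _).continuousAt.continuousWithinAt)
    (fun t ht => ((hg t (Ico_subset_Icc_self ht)).sub_const _).hasDerivWithinAt)
    (by simp)
    (fun t ht => ((hB t ht).sub_const _).continuousAt.continuousWithinAt)
    (fun t ht => ((hB t (Ico_subset_Icc_self ht)).sub_const _).hasDerivWithinAt)
    bound (right_mem_Icc.2 hab)

lemma MemBloch.norm_sub_apply_zero_le {n : ℕ} {p : ℝ} (hp : 1 < p) {f : (Fin n → ℂ) → ℂ}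
    (hf : MemBloch n p f) {z : Fin n → ℂ} (hz : z ∈ polydisc n) :
    ‖f z - f 0‖ ≤ blochSeminorm n p f / (p - 1) * ∑ k, (1 - ‖z k‖) ^ (1 - p) := by
  set C := blochSeminorm n p f
  have hg : ∀ t ∈ Icc (0 : ℝ) 1,
      HasDerivAt (fun s : ℝ => f (s • z)) (fderiv ℂ f (t • z) z) t := fun t ht => by
    have hline : HasDerivAt (fun s : ℝ => s • z) z t := by
      simpa using (hasDerivAt_id t).smul_const z
    have hft : DifferentiableAt ℂ f (t • z) :=
      hf.1.differentiableAt ((isOpen_polydisc n).mem_nhds (smul_mem_polydisc hz ht))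
    exact (hft.hasFDerivAt.restrictScalars ℝ).comp_hasDerivAt t hline
  have hB : ∀ t ∈ Icc (0 : ℝ) 1,
      HasDerivAt (fun s => C * ∑ k, (1 - s * ‖z k‖) ^ (1 - p) / (p - 1))
        (C * ∑ k, ‖z k‖ / (1 - t * ‖z k‖) ^ p) t := fun t ht =>
    (HasDerivAt.fun_sum fun k _ =>
      hasDerivAt_one_sub_mul_rpow_div hp.ne' (one_sub_mul_norm_pos hz ht k)).const_mul C
  have hB0 : 0 ≤ C * ∑ k, (1 - 0 * ‖z k‖) ^ (1 - p) / (p - 1) :=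
    mul_nonneg (blochSeminorm_nonneg n p f) (Finset.sum_nonneg fun k _ =>
      div_nonneg (Real.rpow_nonneg (by simp) _) (by linarith))
  have := norm_sub_le_sub_of_norm_deriv_le_deriv zero_le_one hg hB
    fun t ht => norm_fderiv_smul_apply_le (by linarith) hf.2 hz (Ico_subset_Icc_self ht)
  simp only [one_smul, zero_smul, one_mul] at this
  rw [div_mul_eq_mul_div, Finset.mul_sum, Finset.sum_div]
  simp only [mul_div_assoc, ← Finset.mul_sum]
  linarith

lemma one_sub_rpow_neg_le {r q : ℝ} (hr0 : 0 ≤ r) (hr1 : r < 1) (hq : 0 ≤ q) :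
    (1 - r) ^ (-q) ≤ 2 ^ q * (1 / (1 - r ^ 2) ^ q) := by
  have hsq : 0 < 1 - r ^ 2 := by nlinarith
  have hle : 1 - r ^ 2 ≤ 2 * (1 - r) := by nlinarith
  calc (1 - r) ^ (-q) = 2 ^ q * (2 * (1 - r)) ^ (-q) := by
        rw [Real.mul_rpow zero_le_two (by linarith), ← mul_assoc, ← Real.rpow_add two_pos,
          add_neg_cancel, Real.rpow_zero, one_mul]
    _ ≤ 2 ^ q * (1 - r ^ 2) ^ (-q) := mul_le_mul_of_nonneg_left
        (Real.rpow_le_rpow_of_nonpos hsq hle (neg_nonpos.2 hq)) (by positivity)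
    _ = 2 ^ q * (1 / (1 - r ^ 2) ^ q) := by rw [Real.rpow_neg hsq.le, one_div]

lemma sum_one_sub_norm_rpow_le {n : ℕ} {p : ℝ} (hp : 1 ≤ p) {z : Fin n → ℂ}
    (hz : z ∈ polydisc n) :
    ∑ k, (1 - ‖z k‖) ^ (1 - p) ≤ 2 ^ (p - 1) * ∑ k, 1 / (1 - ‖z k‖ ^ 2) ^ (p - 1) := by
  rw [Finset.mul_sum]
  refine Finset.sum_le_sum fun k _ => ?_
  rw [show 1 - p = -(p - 1) by ring]
  exact one_sub_rpow_neg_le (norm_nonneg _) (hz k) (by linarith)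

lemma card_le_sum_one_div_one_sub_norm_sq_rpow {n : ℕ} {q : ℝ} (hq : 0 ≤ q)
    {z : Fin n → ℂ} (hz : z ∈ polydisc n) :
    (n : ℝ) ≤ ∑ k, 1 / (1 - ‖z k‖ ^ 2) ^ q := by
  calc (n : ℝ) = ∑ _k : Fin n, (1 : ℝ) := by simp
    _ ≤ _ := Finset.sum_le_sum fun k _ => by
        have hpos := one_sub_norm_sq_pos hz k
        rw [le_div_iff₀ (Real.rpow_pos_of_pos hpos q), one_mul]
        exact Real.rpow_le_one hpos.le (by nlinarith [norm_nonneg (z k)]) hq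

/-- Lemma 1 (3): growth estimate for functions in the p-Bloch space, p > 1. -/
theorem bloch_growth_gt_one (n : ℕ) (hn : 0 < n) (p : ℝ) (hp : 1 < p)
    (f : (Fin n → ℂ) → ℂ) (hf : MemBloch n p f) :
    ∀ z ∈ polydisc n,
      ‖f z‖ ≤ (1 / (n : ℝ) + (2 : ℝ) ^ (p - 1) / (p - 1)) *
        (∑ k : Fin n, 1 / (1 - ‖z k‖ ^ 2) ^ (p - 1)) * blochNorm n p f := by
  intro z hz
  set S := ∑ k : Fin n, 1 / (1 - ‖z k‖ ^ 2) ^ (p - 1)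
  set C := blochSeminorm n p f
  set A := (2 : ℝ) ^ (p - 1) / (p - 1)
  have hC : 0 ≤ C := blochSeminorm_nonneg n p f
  have hp1 : 0 < p - 1 := by linarith
  have hA : 0 ≤ A := by positivity
  have hdiff : ‖f z - f 0‖ ≤ A * S * C := calc
    _ ≤ C / (p - 1) * (2 ^ (p - 1) * S) := (hf.norm_sub_apply_zero_le hp hz).trans
        (mul_le_mul_of_nonneg_left (sum_one_sub_norm_rpow_le hp.le hz) (div_nonneg hC hp1.le))
    _ = A * S * C := by ring
  have hnS : (n : ℝ) ≤ S := card_le_sum_one_div_one_sub_norm_sq_rpow hp1.le hz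
  have hSn : 1 ≤ 1 / (n : ℝ) * S := by
    rwa [one_div_mul_eq_div, one_le_div (by exact_mod_cast hn)]
  have hS : 0 ≤ S := (Nat.cast_nonneg n).trans hnS
  rw [blochNorm_eq]
  calc ‖f z‖ ≤ ‖f 0‖ + ‖f z - f 0‖ := norm_le_insert' _ _
    _ ≤ 1 / (n : ℝ) * S * ‖f 0‖ + A * S * C :=
        add_le_add (le_mul_of_one_le_left (norm_nonneg _) hSn) hdiff
    _ ≤ (1 / (n : ℝ) + A) * S * (‖f 0‖ + C) := by
        nlinarith [mul_nonneg (mul_nonneg hA hS) (norm_nonneg (f 0)),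
          mul_nonneg (mul_nonneg (one_div_nonneg.2 (Nat.cast_nonneg n : (0 : ℝ) ≤ n)) hS) hC]
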